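/- arXiv:2504.05606 — 2 statements merged into one kernel-verified Lean document; each statement's English description precedes it below -/
import Mathlib

section
/- Let k, k' be integers, ν, ν' complex numbers and t a real number. Set μ := ν + |k|/2 and μ' := ν' + |k'|/2, and assume |Re(ν)| ≤ 1/2 whenever |k| ≥ 2 and |Re(ν')| ≤ 1/2 whenever |k'| ≥ 2. Then (| |k+k'|/2 + ν + ν' + it | + 3)² ≤ (|μ|+3)²·(|μ'|+3)²·(|t|+3)². -/
/-- The complex-place case of the archimedean conductor bound: for integers `k, k'`,
complex `ν, ν'` with `|Re ν| ≤ 1/2` whenever `|k| ≥ 2` (and similarly for `ν', k'`),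
setting `μ = ν + |k|/2` and `μ' = ν' + |k'|/2`, for every real `t`,
`(||k+k'|/2 + ν + ν' + it| + 3)² ≤ (|μ|+3)²(|μ'|+3)²(|t|+3)²`. -/
theorem conductor_bound_complex_place (k k' : ℤ) (ν ν' : ℂ) (t : ℝ)
    (h : 2 ≤ |k| → |ν.re| ≤ 1 / 2) (h' : 2 ≤ |k'| → |ν'.re| ≤ 1 / 2) :
    (‖((|k + k'| : ℝ) / 2 : ℂ) + ν + ν' + t * Complex.I‖ + 3) ^ 2 ≤
      (‖ν + (|k| : ℝ) / 2‖ + 3) ^ 2 *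
        (‖ν' + (|k'| : ℝ) / 2‖ + 3) ^ 2 * (|t| + 3) ^ 2 := by
  set a := ‖ν + (|k| : ℝ) / 2‖ with ha
  set b := ‖ν' + (|k'| : ℝ) / 2‖ with hb
  have ha0 : 0 ≤ a := norm_nonneg _
  have hb0 : 0 ≤ b := norm_nonneg _
  have ht0 : 0 ≤ |t| := abs_nonneg t
  set d : ℝ := ((|k| : ℝ) + (|k'| : ℝ) - (|k + k'| : ℝ)) / 2 with hd
  have habsadd : (|k + k'| : ℝ) ≤ (|k| : ℝ) + (|k'| : ℝ) := by
    exact_mod_cast abs_add_le k k'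
  have hd0 : 0 ≤ d := by rw [hd]; linarith
  have hdk : d ≤ (|k| : ℝ) := by
    have h1 : |k'| ≤ |k + k'| + |k| := by
      have := abs_add_le (k + k') (-k)
      simpa using this
    have h1' : (|k'| : ℝ) ≤ (|k + k'| : ℝ) + (|k| : ℝ) := by exact_mod_cast h1
    rw [hd]; linarith
  have hdk' : d ≤ (|k'| : ℝ) := by
    have h1 : |k| ≤ |k + k'| + |k'| := by
      have := abs_add_le (k + k') (-k')
      simpa using this
    have h1' : (|k| : ℝ) ≤ (|k + k'| : ℝ) + (|k'| : ℝ) := by exact_mod_cast h1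
    rw [hd]; linarith
  have hak : (|k| : ℝ) ≤ 2 * a + 1 := by
    rcases le_or_gt 2 |k| with hk2 | hk2
    · have hre := abs_le.mp (h hk2)
      have hk2' : (2 : ℝ) ≤ (|k| : ℝ) := by exact_mod_cast hk2
      have h1 : |(ν + ((|k| : ℝ) / 2 : ℂ)).re| ≤ a := Complex.abs_re_le_norm _
      have h2 : (ν + ((|k| : ℝ) / 2 : ℂ)).re = ν.re + (|k| : ℝ) / 2 := by simp
      rw [h2] at h1
      have h3 : ν.re + (|k| : ℝ) / 2 ≤ |ν.re + (|k| : ℝ) / 2| := le_abs_self _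
      linarith
    · have : (|k| : ℝ) ≤ 1 := by exact_mod_cast Int.lt_add_one_iff.mp hk2
      linarith
  have hbk : (|k'| : ℝ) ≤ 2 * b + 1 := by
    rcases le_or_gt 2 |k'| with hk2 | hk2
    · have hre := abs_le.mp (h' hk2)
      have hk2' : (2 : ℝ) ≤ (|k'| : ℝ) := by exact_mod_cast hk2
      have h1 : |(ν' + ((|k'| : ℝ) / 2 : ℂ)).re| ≤ b := Complex.abs_re_le_norm _
      have h2 : (ν' + ((|k'| : ℝ) / 2 : ℂ)).re = ν'.re + (|k'| : ℝ) / 2 := by simp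
      rw [h2] at h1
      have h3 : ν'.re + (|k'| : ℝ) / 2 ≤ |ν'.re + (|k'| : ℝ) / 2| := le_abs_self _
      linarith
    · have : (|k'| : ℝ) ≤ 1 := by exact_mod_cast Int.lt_add_one_iff.mp hk2
      linarith
  have key : ‖((|k + k'| : ℝ) / 2 : ℂ) + ν + ν' + t * Complex.I‖
      ≤ a + b + d + |t| := by
    have heq : (((|k + k'| : ℝ) / 2 : ℂ) + ν + ν' + t * Complex.I)
        = (ν + ((|k| : ℝ) / 2 : ℂ)) + (ν' + ((|k'| : ℝ) / 2 : ℂ)) + (-(d : ℂ))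
          + t * Complex.I := by
      rw [hd]; push_cast; ring
    rw [heq]
    have t1 := norm_add_le
      ((ν + ((|k| : ℝ) / 2 : ℂ)) + (ν' + ((|k'| : ℝ) / 2 : ℂ)) + (-(d : ℂ)))
      (t * Complex.I)
    have t2 := norm_add_le
      ((ν + ((|k| : ℝ) / 2 : ℂ)) + (ν' + ((|k'| : ℝ) / 2 : ℂ))) (-(d : ℂ))
    have t3 := norm_add_le (ν + ((|k| : ℝ) / 2 : ℂ)) (ν' + ((|k'| : ℝ) / 2 : ℂ))
    have e1 : ‖-(d : ℂ)‖ = d := by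
      rw [norm_neg, Complex.norm_real, Real.norm_eq_abs, abs_of_nonneg hd0]
    have e2 : ‖t * Complex.I‖ = |t| := by
      simp
    rw [e1] at t2
    rw [e2] at t1
    calc ‖_‖ ≤ _ := t1
      _ ≤ (‖(ν + ((|k| : ℝ) / 2 : ℂ)) + (ν' + ((|k'| : ℝ) / 2 : ℂ))‖ + d)
          + |t| := by linarith
      _ ≤ a + b + d + |t| := by linarith
  have base : ‖((|k + k'| : ℝ) / 2 : ℂ) + ν + ν' + t * Complex.I‖ + 3
      ≤ (a + 3) * (b + 3) * (|t| + 3) := by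
    have hda : d ≤ 2 * a + 1 := le_trans hdk hak
    nlinarith [mul_nonneg ha0 hb0, mul_nonneg ha0 ht0, mul_nonneg hb0 ht0,
      mul_nonneg (mul_nonneg ha0 hb0) ht0]
  have hL0 : 0 ≤ ‖((|k + k'| : ℝ) / 2 : ℂ) + ν + ν' + t * Complex.I‖ + 3 := by
    positivity
  calc (‖((|k + k'| : ℝ) / 2 : ℂ) + ν + ν' + t * Complex.I‖ + 3) ^ 2
      ≤ ((a + 3) * (b + 3) * (|t| + 3)) ^ 2 := by
        exact pow_le_pow_left₀ hL0 base 2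
    _ = (a + 3) ^ 2 * (b + 3) ^ 2 * (|t| + 3) ^ 2 := by ring
end

section
/- Let ε, ε' ∈ {1, −1}, let ν, ν' be complex numbers and t a real number. Set μ := ν + (1−ε)/2 and μ' := ν' + (1−ε')/2, and assume |Re(ν)| ≤ 1/2 if ε = −1, and |Re(ν')| ≤ 1/2 if ε' = −1. Then |(1−εε')/2 + ν + ν' + it| + 3 ≤ (|μ|+3)·(|μ'|+3)·(|t|+3). -/
/-- The real-place case of two one-dimensional representations in the archimedean
conductor bound: for `ε, ε' ∈ {1, −1}`, complex `ν, ν'` with `|Re ν| ≤ 1/2` if `ε = −1`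
(and similarly for `ν'`), setting `μ = ν + (1−ε)/2` and `μ' = ν' + (1−ε')/2`, for every
real `t`, `|(1−εε')/2 + ν + ν' + it| + 3 ≤ (|μ|+3)(|μ'|+3)(|t|+3)`. -/
theorem conductor_bound_real_place_one_dim (ε ε' : ℝ)
    (hε : ε = 1 ∨ ε = -1) (hε' : ε' = 1 ∨ ε' = -1) (ν ν' : ℂ) (t : ℝ)
    (h : ε = -1 → |ν.re| ≤ 1 / 2) (h' : ε' = -1 → |ν'.re| ≤ 1 / 2) :
    ‖(((1 - ε * ε') / 2 : ℝ) : ℂ) + ν + ν' + t * Complex.I‖ + 3 ≤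
      (‖ν + ((1 - ε) / 2 : ℝ)‖ + 3) *
        (‖ν' + ((1 - ε') / 2 : ℝ)‖ + 3) * (|t| + 3) := by
  set a := ‖ν + ((1 - ε) / 2 : ℝ)‖ with ha
  set b := ‖ν' + ((1 - ε') / 2 : ℝ)‖ with hb
  have ha0 : 0 ≤ a := norm_nonneg _
  have hb0 : 0 ≤ b := norm_nonneg _
  have hνa : ‖ν‖ ≤ a + 1 := by
    have h1 : ‖ν‖ ≤ a + ‖(((1 - ε) / 2 : ℝ) : ℂ)‖ := by
      have h3 := norm_add_le (ν + ((1 - ε) / 2 : ℝ)) (-(((1 - ε) / 2 : ℝ) : ℂ))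
      rw [add_neg_cancel_right, norm_neg] at h3
      exact h3
    have h2 : ‖(((1 - ε) / 2 : ℝ) : ℂ)‖ ≤ 1 := by
      rw [Complex.norm_real, Real.norm_eq_abs]
      rcases hε with he | he <;> rw [he] <;> norm_num
    linarith
  have hνb : ‖ν'‖ ≤ b + 1 := by
    have h1 : ‖ν'‖ ≤ b + ‖(((1 - ε') / 2 : ℝ) : ℂ)‖ := by
      have h3 := norm_add_le (ν' + ((1 - ε') / 2 : ℝ)) (-(((1 - ε') / 2 : ℝ) : ℂ))
      rw [add_neg_cancel_right, norm_neg] at h3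
      exact h3
    have h2 : ‖(((1 - ε') / 2 : ℝ) : ℂ)‖ ≤ 1 := by
      rw [Complex.norm_real, Real.norm_eq_abs]
      rcases hε' with he | he <;> rw [he] <;> norm_num
    linarith
  have hL : ‖(((1 - ε * ε') / 2 : ℝ) : ℂ) + ν + ν' + t * Complex.I‖ ≤
      1 + ‖ν‖ + ‖ν'‖ + |t| := by
    calc ‖(((1 - ε * ε') / 2 : ℝ) : ℂ) + ν + ν' + t * Complex.I‖
        ≤ ‖(((1 - ε * ε') / 2 : ℝ) : ℂ) + ν + ν'‖ +
            ‖(t : ℂ) * Complex.I‖ := norm_add_le _ _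
      _ ≤ ‖(((1 - ε * ε') / 2 : ℝ) : ℂ) + ν‖ + ‖ν'‖ +
            ‖(t : ℂ) * Complex.I‖ := by
          gcongr; exact norm_add_le _ _
      _ ≤ ‖(((1 - ε * ε') / 2 : ℝ) : ℂ)‖ + ‖ν‖ + ‖ν'‖ +
            ‖(t : ℂ) * Complex.I‖ := by
          gcongr; exact norm_add_le _ _
      _ ≤ 1 + ‖ν‖ + ‖ν'‖ + |t| := by
          have h2 : ‖(((1 - ε * ε') / 2 : ℝ) : ℂ)‖ ≤ 1 := by
            rw [Complex.norm_real, Real.norm_eq_abs]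
            rcases hε with he | he <;> rcases hε' with he' | he' <;>
              rw [he, he'] <;> norm_num
          have h3 : ‖(t : ℂ) * Complex.I‖ = |t| := by
            simp
          rw [h3]; linarith
  have ht0 : 0 ≤ |t| := abs_nonneg t
  nlinarith [mul_nonneg ha0 hb0, mul_nonneg ha0 ht0, mul_nonneg hb0 ht0,
    mul_nonneg (mul_nonneg ha0 hb0) ht0, hνa, hνb, hL]
end
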